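/- arXiv:2507.09203 — 2 statements merged into one kernel-verified Lean document; each statement's English description precedes it below -/
import Mathlib

section
/- Let n ≥ 2, κ₀ = (16(n-1)+27)/(80(n-1)+144), and let x, s be real numbers. Then (-3/16 + κ₀)·x² + (-1/2 + 2κ₀)·s·x + (9/(16(n-1)) + κ₀)·s² ≥ 0. -/
/-! Write `m = n - 1 > 0`. The three coefficients are `m / (80m + 144)`, `-2(4m + 9) / (80m + 144)`
and `(4m + 9)² / (m (80m + 144))`, so the form is the perfect square
`(m x - (4m + 9) s)² / (m (80m + 144))`. -/

noncomputable def kappa₀ (m : ℝ) : ℝ := (16 * m + 27) / (80 * m + 144)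

lemma quadratic_form_eq_sq_div {m : ℝ} (hm : m ≠ 0) (hd : 80 * m + 144 ≠ 0) (x s : ℝ) :
    (-3/16 + kappa₀ m) * x ^ 2 + (-1/2 + 2 * kappa₀ m) * s * x
      + (9 / (16 * m) + kappa₀ m) * s ^ 2
      = (m * x - (4 * m + 9) * s) ^ 2 / (m * (80 * m + 144)) := by
  rw [kappa₀]
  -- `field_simp` looks for the denominator in this normal form
  have hd' : m * 80 + 144 ≠ 0 := by rwa [mul_comm]
  field_simp
  ring

lemma quadratic_form_nonneg {m : ℝ} (hm : 0 < m) (x s : ℝ) :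
    0 ≤ (-3/16 + kappa₀ m) * x ^ 2 + (-1/2 + 2 * kappa₀ m) * s * x
      + (9 / (16 * m) + kappa₀ m) * s ^ 2 := by
  rw [quadratic_form_eq_sq_div hm.ne' (by linarith)]
  positivity

theorem quadratic_nonneg (n : ℕ) (hn : 2 ≤ n)
    (κ₀ : ℝ) (hκ : κ₀ = (16 * ((n : ℝ) - 1) + 27) / (80 * ((n : ℝ) - 1) + 144))
    (x s : ℝ) :
    (-3/16 + κ₀) * x ^ 2 + (-1/2 + 2 * κ₀) * s * x
      + (9 / (16 * ((n : ℝ) - 1)) + κ₀) * s ^ 2 ≥ 0 := by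
  have hm : (0 : ℝ) < n - 1 := by
    have : (2 : ℝ) ≤ n := by exact_mod_cast hn
    linarith
  subst hκ
  exact quadratic_form_nonneg hm x s
end

section
/- Let n ≥ 2, κ₀ = (16(n-1)+27)/(80(n-1)+144), and let a_{nn} and the real numbers a_{11},…,a_{n-1,n-1} be given, with s = Σ_{i≠n} a_{ii} and t = s + a_{nn}. Then -3/16·a_{nn}² - 1/2·s·a_{nn} + 9/(16(n-1))·s² ≥ -κ₀·t². -/
/-! With `m = n - 1`, the left-hand side plus `κ₀ t²` is a binary quadratic form in `(a_nn, s)`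
whose discriminant vanishes for exactly this value of `κ₀`: it is the perfect square
`(4 m a_nn - (16 m + 36) s)² / (16 m (80 m + 144))`. -/

lemma quadForm_add_kappa_mul_sq_eq_sq_div {m : ℝ} (hm : 0 < m) (x s : ℝ) :
    -3/16 * x ^ 2 - 1/2 * s * x + 9 / (16 * m) * s ^ 2
        + (16 * m + 27) / (80 * m + 144) * (s + x) ^ 2
      = (4 * m * x - (16 * m + 36) * s) ^ 2 / (16 * m * (80 * m + 144)) := by
  have : 80 * m + 144 ≠ 0 := by positivity
  field_simp
  ring

lemma neg_kappa_mul_sq_le_quadForm {m : ℝ} (hm : 0 < m) (x s : ℝ) :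
    -((16 * m + 27) / (80 * m + 144)) * (s + x) ^ 2
      ≤ -3/16 * x ^ 2 - 1/2 * s * x + 9 / (16 * m) * s ^ 2 := by
  have hsq : 0 ≤ (4 * m * x - (16 * m + 36) * s) ^ 2 / (16 * m * (80 * m + 144)) := by
    positivity
  linarith [quadForm_add_kappa_mul_sq_eq_sq_div hm x s]

theorem diag_trace_ineq (n : ℕ) (hn : 2 ≤ n)
    (κ₀ : ℝ) (hκ : κ₀ = (16 * ((n : ℝ) - 1) + 27) / (80 * ((n : ℝ) - 1) + 144))
    (a : Fin n → ℝ)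
    (s : ℝ)
    (t : ℝ) (ht : t = s + a ⟨n - 1, by omega⟩) :
    -3/16 * (a ⟨n - 1, by omega⟩) ^ 2 - 1/2 * s * a ⟨n - 1, by omega⟩
      + 9 / (16 * ((n : ℝ) - 1)) * s ^ 2 ≥ -κ₀ * t ^ 2 := by
  have hm : (0 : ℝ) < n - 1 := by
    have : (2 : ℝ) ≤ n := by exact_mod_cast hn
    linarith
  rw [hκ, ht]
  exact neg_kappa_mul_sq_le_quadForm hm _ s
end
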